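/- arXiv:1706.04693 — 8 statements merged into one kernel-verified Lean document; each statement's English description precedes it below -/
import Mathlib

section
/- In every double interchange semigroup S, for all elements a, b, c, d, e, f, g, h, i, j of S the following commutativity relation holds (transposing d and g): ((a ▵ b) ▴ (c ▵ (d ▴ e))) ▵ (((f ▴ g) ▵ h) ▴ (i ▵ j)) = ((a ▵ b) ▴ (c ▵ (g ▴ e))) ▵ (((f ▴ d) ▵ h) ▴ (i ▵ j)). -/
/-!
Read `▵` as horizontal and `▴` as vertical juxtaposition. In a two-row block, a cell stacked
inside a column can pass from one row to the other (interchange and associativity of `▴`), and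
a column can pass between the two factors of a horizontal product (interchange and associativity
of `▵`). Moving `g` down and the column of `f` to the left lets `d` climb under `f`; moving the
columns back, `g` climbs under `b`, and once the column of `b` is moved left, `g` descends onto `e`.
-/

namespace DoubleInterchange

variable {S : Type*} {tri blk : S → S → S}

local infixl:65 " ▵ " => tri
local infixl:70 " ▴ " => blk

theorem slide_down_left (hblk : ∀ a b c : S, blk (blk a b) c = blk a (blk b c))
    (hint : ∀ a b c d : S, blk (tri a b) (tri c d) = tri (blk a c) (blk b d))
    (x u y z w : S) : ((x ▴ u) ▵ y) ▴ (z ▵ w) = (x ▵ y) ▴ ((u ▴ z) ▵ w) := by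
  rw [hint, hint, hblk]

theorem slide_up_right (hblk : ∀ a b c : S, blk (blk a b) c = blk a (blk b c))
    (hint : ∀ a b c d : S, blk (tri a b) (tri c d) = tri (blk a c) (blk b d))
    (x y z u w : S) : (x ▵ y) ▴ (z ▵ (u ▴ w)) = (x ▵ (y ▴ u)) ▴ (z ▵ w) := by
  rw [hint, hint, hblk]

theorem shift_column (htri : ∀ a b c : S, tri (tri a b) c = tri a (tri b c))
    (hint : ∀ a b c d : S, blk (tri a b) (tri c d) = tri (blk a c) (blk b d))
    (p q r s t : S) : (p ▴ q) ▵ ((r ▵ s) ▴ t) = ((p ▵ r) ▴ q) ▵ (s ▴ t) := by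
  rw [← hint, ← hint, htri]

end DoubleInterchange

open DoubleInterchange in
/-- In every double interchange semigroup, the commutativity relation
transposing `d` and `g` holds (Configuration A theorem). Here `tri` is the
horizontal operation `▵` and `blk` is the vertical operation `▴`. -/
theorem dis_commutativity_config_A {S : Type*} (tri blk : S → S → S)
    (htri : ∀ a b c : S, tri (tri a b) c = tri a (tri b c))
    (hblk : ∀ a b c : S, blk (blk a b) c = blk a (blk b c))
    (hint : ∀ a b c d : S, blk (tri a b) (tri c d) = tri (blk a c) (blk b d))
    (a b c d e f g h i j : S) :
    tri (blk (tri a b) (tri c (blk d e))) (blk (tri (blk f g) h) (tri i j)) =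
    tri (blk (tri a b) (tri c (blk g e))) (blk (tri (blk f d) h) (tri i j)) :=
  calc tri (blk (tri a b) (tri c (blk d e))) (blk (tri (blk f g) h) (tri i j))
    _ = tri (blk (tri a b) (tri c (blk d e))) (blk (tri f h) (tri (blk g i) j)) := by
      rw [slide_down_left hblk hint f g h i j]
    _ = tri (blk (tri (tri a b) f) (tri c (blk d e))) (blk h (tri (blk g i) j)) := by
      rw [shift_column htri hint]
    _ = tri (blk (tri (tri a b) (blk f d)) (tri c e)) (blk h (tri (blk g i) j)) := by
      rw [slide_up_right hblk hint]
    _ = tri (blk a (tri c e)) (blk (tri b (tri (blk f d) h)) (tri (blk g i) j)) := by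
      rw [htri a b, ← htri b (blk f d) h, shift_column htri hint a]
    _ = tri (blk a (tri c e)) (blk (tri (blk b g) (tri (blk f d) h)) (tri i j)) := by
      rw [slide_down_left hblk hint b g]
    _ = tri (blk (tri a (blk b g)) (tri c e)) (blk (tri (blk f d) h) (tri i j)) := by
      rw [shift_column htri hint]
    _ = tri (blk (tri a b) (tri c (blk g e))) (blk (tri (blk f d) h) (tri i j)) := by
      rw [slide_up_right hblk hint a b c g e]
end

section
/- In every double interchange semigroup S, for all elements a, b, c, d, e, f, g, h, i, j of S the following commutativity relation holds (transposing c and g): ((a ▵ (b ▴ c)) ▴ (f ▵ (g ▴ h))) ▵ ((d ▵ e) ▴ (i ▵ j)) = ((a ▵ (b ▴ g)) ▴ (f ▵ (c ▴ h))) ▵ ((d ▵ e) ▴ (i ▵ j)). -/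
/-!
Read `tri` (`▵`) as placing side by side and `blk` (`▴`) as stacking, so that every term
of the theorem is a two-by-two array of blocks. Interchange together with associativity
lets one move an internal boundary of such an array within a single row or column. Four
such moves carry `g` from above `h` to above `i`; one more carries `c` from below `b` to
above `h`, into the spot `g` has vacated; three more bring `g` back to below `b`.
-/

section Regroup

variable {S : Type*} (tri blk : S → S → S)

theorem regroup_top_row (htri : ∀ a b c : S, tri (tri a b) c = tri a (tri b c))
    (hint : ∀ a b c d : S, blk (tri a b) (tri c d) = tri (blk a c) (blk b d))
    (x y w z v : S) :
    tri (blk x y) (blk (tri w z) v) = tri (blk (tri x w) y) (blk z v) := by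
  rw [← hint, ← htri, hint]

theorem regroup_left_column (hblk : ∀ a b c : S, blk (blk a b) c = blk a (blk b c))
    (hint : ∀ a b c d : S, blk (tri a b) (tri c d) = tri (blk a c) (blk b d))
    (x w y z v : S) :
    blk (tri (blk x w) y) (tri z v) = blk (tri x y) (tri (blk w z) v) := by
  rw [hint, hblk, ← hint]

theorem regroup_right_column (hblk : ∀ a b c : S, blk (blk a b) c = blk a (blk b c))
    (hint : ∀ a b c d : S, blk (tri a b) (tri c d) = tri (blk a c) (blk b d))
    (x y w z v : S) :
    blk (tri x (blk y w)) (tri z v) = blk (tri x y) (tri z (blk w v)) := by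
  rw [hint, hblk, ← hint]

end Regroup

/-- In every double interchange semigroup, the commutativity relation
transposing `c` and `g` holds (Configuration B theorem). Here `tri` is the
horizontal operation `▵` and `blk` is the vertical operation `▴`. -/
theorem dis_commutativity_config_B {S : Type*} (tri blk : S → S → S)
    (htri : ∀ a b c : S, tri (tri a b) c = tri a (tri b c))
    (hblk : ∀ a b c : S, blk (blk a b) c = blk a (blk b c))
    (hint : ∀ a b c d : S, blk (tri a b) (tri c d) = tri (blk a c) (blk b d))
    (a b c d e f g h i j : S) :
    tri (blk (tri a (blk b c)) (tri f (blk g h))) (blk (tri d e) (tri i j)) =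
    tri (blk (tri a (blk b g)) (tri f (blk c h))) (blk (tri d e) (tri i j)) := by
  have row := regroup_top_row tri blk htri hint
  have left := regroup_left_column tri blk hblk hint
  have right := regroup_right_column tri blk hblk hint
  calc tri (blk (tri a (blk b c)) (tri f (blk g h))) (blk (tri d e) (tri i j))
    _ = tri (blk (tri (tri a (blk b c)) (blk d g)) (tri f h)) (blk e (tri i j)) := by
      rw [row, ← right]
    _ = tri (blk (tri a (blk b c)) (tri f h)) (blk (tri d e) (tri (blk g i) j)) := by
      rw [← row, left]
    _ = tri (blk a (tri f (blk c h))) (blk (tri b (tri d e)) (tri (blk g i) j)) := by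
      rw [right, ← row a]
    _ = tri (blk (tri a (blk b g)) (tri f (blk c h))) (blk (tri d e) (tri i j)) := by
      rw [← left, ← row]
end

section
/- (Kock's relation.) In every double interchange semigroup S, for all elements a, b, c, d, e, f, g, h, i, j, k, l, m, n, p, q of S the following 16-argument relation holds (transposing f and g): (((a ▵ b) ▵ (c ▵ d)) ▴ ((e ▵ f) ▵ (g ▵ h))) ▴ (((i ▵ j) ▵ (k ▵ l)) ▴ ((m ▵ n) ▵ (p ▵ q))) = (((a ▵ b) ▵ (c ▵ d)) ▴ ((e ▵ g) ▵ (f ▵ h))) ▴ (((i ▵ j) ▵ (k ▵ l)) ▴ ((m ▵ n) ▵ (p ▵ q))). -/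
/-!
Reading `▵` as horizontal and `▴` as vertical juxtaposition, both sides are equal to the term
`((a ▴ e) ▵ (b ▴ g) ▵ c) ▴ (i ▵ (f ▴ k) ▵ (h ▴ l))`, which is the bracketing of no subdivision
of a rectangle. Interchange and associativity unfold it in one way into the three rows
`a ▵ b ▵ c`, `e ▵ f ▵ g ▵ h`, `i ▵ k ▵ l`, and in another way into the same rows with `f` and `g`
transposed. So three rows already suffice; a fourth row is simply carried along.
-/

structure IsDoubleInterchangeSemigroup {S : Type*} (tri blk : S → S → S) : Prop where
  tri_assoc : ∀ a b c : S, tri (tri a b) c = tri a (tri b c)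
  blk_assoc : ∀ a b c : S, blk (blk a b) c = blk a (blk b c)
  interchange : ∀ a b c d : S, blk (tri a b) (tri c d) = tri (blk a c) (blk b d)

namespace IsDoubleInterchangeSemigroup

variable {S : Type*} {tri blk : S → S → S}

local notation:70 x:70 " ▵ " y:71 => tri x y
local notation:65 x:65 " ▴ " y:66 => blk x y

theorem interchange_three (hS : IsDoubleInterchangeSemigroup tri blk) (x y z u v w : S) :
    (x ▴ y ▴ z) ▵ (u ▴ v ▴ w) = (x ▵ u) ▴ (y ▵ v) ▴ (z ▵ w) := by
  rw [hS.interchange, hS.interchange]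

theorem three_rows_swapped_eq_mixed (hS : IsDoubleInterchangeSemigroup tri blk)
    (a b c e f g h i k l : S) :
    (a ▵ b ▵ c) ▴ (e ▵ g ▵ f ▵ h) ▴ (i ▵ k ▵ l) =
      ((a ▴ e) ▵ (b ▴ g) ▵ c) ▴ (i ▵ (f ▴ k) ▵ (h ▴ l)) :=
  calc (a ▵ b ▵ c) ▴ (e ▵ g ▵ f ▵ h) ▴ (i ▵ k ▵ l)
      = (a ▵ b ▵ c) ▴ (e ▵ g ▵ (f ▵ h)) ▴ (i ▵ (k ▵ l)) := by
        rw [hS.tri_assoc (e ▵ g), hS.tri_assoc i]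
    _ = ((a ▵ b) ▴ (e ▵ g) ▴ i) ▵ (c ▴ (f ▵ h) ▴ (k ▵ l)) := (hS.interchange_three ..).symm
    _ = (((a ▵ b) ▴ (e ▵ g)) ▵ c) ▴ (i ▵ ((f ▵ h) ▴ (k ▵ l))) := by
        rw [hS.blk_assoc c, hS.interchange _ c i]
    _ = ((a ▴ e) ▵ (b ▴ g) ▵ c) ▴ (i ▵ (f ▴ k) ▵ (h ▴ l)) := by
        rw [hS.interchange a b e g, hS.interchange f h k l, hS.tri_assoc i]

theorem three_rows_eq_mixed (hS : IsDoubleInterchangeSemigroup tri blk)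
    (a b c e f g h i k l : S) :
    (a ▵ b ▵ c) ▴ (e ▵ f ▵ g ▵ h) ▴ (i ▵ k ▵ l) =
      ((a ▴ e) ▵ (b ▴ g) ▵ c) ▴ (i ▵ (f ▴ k) ▵ (h ▴ l)) :=
  calc (a ▵ b ▵ c) ▴ (e ▵ f ▵ g ▵ h) ▴ (i ▵ k ▵ l)
      = (a ▵ (b ▵ c)) ▴ (e ▵ f ▵ (g ▵ h)) ▴ (i ▵ k ▵ l) := by
        rw [hS.tri_assoc a, hS.tri_assoc (e ▵ f)]
    _ = (a ▴ (e ▵ f) ▴ (i ▵ k)) ▵ ((b ▵ c) ▴ (g ▵ h) ▴ l) := (hS.interchange_three ..).symm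
    _ = (a ▴ ((e ▴ i) ▵ (f ▴ k))) ▵ ((b ▴ g) ▵ (c ▴ h) ▴ l) := by
        rw [hS.blk_assoc a, hS.interchange e, hS.interchange b]
    _ = (a ▵ ((b ▴ g) ▵ (c ▴ h))) ▴ ((e ▴ i) ▵ ((f ▴ k) ▵ l)) := by
        rw [← hS.tri_assoc (e ▴ i), hS.interchange a _ _ l]
    _ = (a ▴ e ▴ i) ▵ ((b ▴ g ▴ (f ▴ k)) ▵ (c ▴ (h ▴ l))) := by
        rw [hS.interchange a _ (e ▴ i), hS.interchange (b ▴ g), hS.blk_assoc a, hS.blk_assoc c]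
    _ = ((a ▴ e) ▵ (b ▴ g) ▵ c) ▴ (i ▵ (f ▴ k) ▵ (h ▴ l)) := by
        rw [← hS.interchange (b ▴ g) c (f ▴ k) (h ▴ l), ← hS.interchange (a ▴ e) _ i,
          hS.tri_assoc (a ▴ e), hS.tri_assoc i]

theorem three_rows_swap (hS : IsDoubleInterchangeSemigroup tri blk) (a b c e f g h i k l : S) :
    (a ▵ b ▵ c) ▴ (e ▵ f ▵ g ▵ h) ▴ (i ▵ k ▵ l) = (a ▵ b ▵ c) ▴ (e ▵ g ▵ f ▵ h) ▴ (i ▵ k ▵ l) := by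
  rw [hS.three_rows_eq_mixed, hS.three_rows_swapped_eq_mixed]

end IsDoubleInterchangeSemigroup

/-- Kock's 16-argument relation in every double interchange semigroup,
transposing `f` and `g`. Here `tri` is `▵` and `blk` is `▴`. -/
theorem dis_kock_relation {S : Type*} (tri blk : S → S → S)
    (htri : ∀ a b c : S, tri (tri a b) c = tri a (tri b c))
    (hblk : ∀ a b c : S, blk (blk a b) c = blk a (blk b c))
    (hint : ∀ a b c d : S, blk (tri a b) (tri c d) = tri (blk a c) (blk b d))
    (a b c d e f g h i j k l m n p q : S) :
    blk (blk (tri (tri a b) (tri c d)) (tri (tri e f) (tri g h)))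
        (blk (tri (tri i j) (tri k l)) (tri (tri m n) (tri p q))) =
    blk (blk (tri (tri a b) (tri c d)) (tri (tri e g) (tri f h)))
        (blk (tri (tri i j) (tri k l)) (tri (tri m n) (tri p q))) := by
  have hS : IsDoubleInterchangeSemigroup tri blk := ⟨htri, hblk, hint⟩
  have key := hS.three_rows_swap a b (tri c d) e f g h (tri i j) k l
  simpa only [htri, hblk] using congrArg (blk · (tri (tri m n) (tri p q))) key
end

section
/- (Bremner–Madariaga nine-variable relation.) In every double interchange semigroup S, for all elements a, b, c, d, e, f, g, h, i of S the following relation holds (transposing e and g): ((a ▵ b) ▵ c) ▴ (((d ▵ (e ▴ f)) ▵ (g ▴ h)) ▵ i) = ((a ▵ b) ▵ c) ▴ (((d ▵ (g ▴ f)) ▵ (e ▴ h)) ▵ i). -/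
/-!
Read `▵` as placing blocks side by side and `▴` as stacking them. By the interchange law, a cell may
slide across the edge between two rows as long as both rows have a common cut on either side of it.
The transposition is a sequence of such slides: `e` moves up under `b`; then `g` moves up under
`b ▴ e` and back down on top of `f`; finally `e` moves down on top of `h`.
-/

section Interchange

variable {S : Type*} {tri blk : S → S → S}

local infixl:70 " ▵ " => tri
local infixl:70 " ▴ " => blk

theorem interchange_congr_left (hint : ∀ a b c d : S, (a ▵ b) ▴ (c ▵ d) = (a ▴ c) ▵ (b ▴ d))
    {x y x' y' : S} (h : x ▴ y = x' ▴ y') (u v : S) :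
    (x ▵ u) ▴ (y ▵ v) = (x' ▵ u) ▴ (y' ▵ v) := by
  rw [hint, h, ← hint]

theorem interchange_congr_right (hint : ∀ a b c d : S, (a ▵ b) ▴ (c ▵ d) = (a ▴ c) ▵ (b ▴ d))
    {u v u' v' : S} (h : u ▴ v = u' ▴ v') (x y : S) :
    (x ▵ u) ▴ (y ▵ v) = (x ▵ u') ▴ (y ▵ v') := by
  rw [hint, h, ← hint]

theorem slide_right (hblk : ∀ a b c : S, (a ▴ b) ▴ c = a ▴ (b ▴ c))
    (hint : ∀ a b c d : S, (a ▵ b) ▴ (c ▵ d) = (a ▴ c) ▵ (b ▴ d)) (a b c d e : S) :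
    (a ▵ b) ▴ (c ▵ (d ▴ e)) = (a ▵ (b ▴ d)) ▴ (c ▵ e) :=
  interchange_congr_right hint (hblk b d e).symm a c

theorem slide_left (hblk : ∀ a b c : S, (a ▴ b) ▴ c = a ▴ (b ▴ c))
    (hint : ∀ a b c d : S, (a ▵ b) ▴ (c ▵ d) = (a ▴ c) ▵ (b ▴ d)) (a b c d e : S) :
    (a ▵ b) ▴ ((c ▴ d) ▵ e) = ((a ▴ c) ▵ b) ▴ (d ▵ e) :=
  interchange_congr_left hint (hblk a c d).symm b e

end Interchange

/-- The Bremner–Madariaga nine-variable commutativity relation in every double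
interchange semigroup, transposing `e` and `g`. Here `tri` is `▵` and `blk` is `▴`. -/
theorem dis_bremner_madariaga {S : Type*} (tri blk : S → S → S)
    (htri : ∀ a b c : S, tri (tri a b) c = tri a (tri b c))
    (hblk : ∀ a b c : S, blk (blk a b) c = blk a (blk b c))
    (hint : ∀ a b c d : S, blk (tri a b) (tri c d) = tri (blk a c) (blk b d))
    (a b c d e f g h i : S) :
    blk (tri (tri a b) c) (tri (tri (tri d (blk e f)) (blk g h)) i) =
    blk (tri (tri a b) c) (tri (tri (tri d (blk g f)) (blk e h)) i) := by
  have slide_up (b d e f z : S) :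
      blk (tri (tri a b) c) (tri (tri d (blk e f)) z) =
      blk (tri (tri a (blk b e)) c) (tri (tri d f) z) :=
    interchange_congr_left hint (slide_right hblk hint a b d e f) c z
  calc blk (tri (tri a b) c) (tri (tri (tri d (blk e f)) (blk g h)) i)
    _ = blk (tri (tri a (blk b e)) c) (tri (tri d f) (tri (blk g h) i)) := by
      rw [htri _ (blk g h), slide_up]
    _ = blk (tri a (tri (blk (blk b e) g) c)) (tri (tri d f) (tri h i)) := by
      rw [htri a]
      exact interchange_congr_right hint (slide_left hblk hint (blk b e) c g h i) a _
    _ = blk (tri (tri a (blk b e)) c) (tri (tri d (blk g f)) (tri h i)) := by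
      rw [← htri a, slide_up]
    _ = blk (tri (tri a b) c) (tri (tri (tri d (blk g f)) (blk e h)) i) := by
      rw [← htri _ h, slide_up]
end

section
/- In every double interchange semigroup S, for all elements a, b, c, d, e, f of S: ((a ▴ b) ▴ c) ▵ ((d ▵ e) ▴ f) = ((a ▵ d) ▵ e) ▴ ((b ▴ c) ▵ f). -/
-- `tri` is `▵` and `blk` is `▴`.
/-- A six-variable relation in every double interchange semigroup.
Here `tri` is `▵` and `blk` is `▴`. -/
theorem dis_six_variable_relation {S : Type*} (tri blk : S → S → S)
    (htri : ∀ a b c : S, tri (tri a b) c = tri a (tri b c))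
    (hblk : ∀ a b c : S, blk (blk a b) c = blk a (blk b c))
    (hint : ∀ a b c d : S, blk (tri a b) (tri c d) = tri (blk a c) (blk b d))
    (a b c d e f : S) :
    tri (blk (blk a b) c) (blk (tri d e) f) =
    blk (tri (tri a d) e) (tri (blk b c) f) :=
  calc tri (blk (blk a b) c) (blk (tri d e) f)
      = tri (blk a (blk b c)) (blk (tri d e) f) := by rw [hblk]
    _ = blk (tri a (tri d e)) (tri (blk b c) f) := (hint a (tri d e) (blk b c) f).symm
    _ = blk (tri (tri a d) e) (tri (blk b c) f) := by rw [htri]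
end

section
/- In every double interchange semigroup S, for all elements a, b, c, d, e, f, g, h, i, j of S: ((a ▵ b) ▴ (c ▵ (d ▴ e))) ▵ (((f ▴ g) ▵ h) ▴ (i ▵ j)) = ((a ▵ ((b ▴ d) ▴ g)) ▴ (c ▵ e)) ▵ ((f ▵ h) ▴ (i ▵ j)). -/
/-! Read `▵` as placing side by side and `▴` as stacking. The interchange law together with one
associativity law gives a sliding move each: a `▴`-factor may pass between the two rows of a
`▴` of two `▵`s, and a `▵`-factor between the two columns of a `▵` of two `▴`s. Sliding `d` up,
`f ▴ g` left, `g` down, `f` back right and `g` up again turns one side into the other. -/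

section SlideMoves

variable {S : Type*} (tri blk : S → S → S)

theorem blk_tri_blk_shift
    (hint : ∀ a b c d : S, blk (tri a b) (tri c d) = tri (blk a c) (blk b d))
    (hblk : ∀ a b c : S, blk (blk a b) c = blk a (blk b c))
    (a b c d e : S) :
    blk (tri a b) (tri c (blk d e)) = blk (tri a (blk b d)) (tri c e) := by
  rw [hint, hint, hblk]

theorem tri_blk_tri_shift
    (hint : ∀ a b c d : S, blk (tri a b) (tri c d) = tri (blk a c) (blk b d))
    (htri : ∀ a b c : S, tri (tri a b) c = tri a (tri b c))
    (a b c d e : S) :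
    tri (blk a b) (blk (tri c d) e) = tri (blk (tri a c) b) (blk d e) := by
  rw [← hint, ← hint, htri]

end SlideMoves

/-- A ten-variable relation in every double interchange semigroup
(an intermediate step in the Configuration A rewriting).
Here `tri` is `▵` and `blk` is `▴`. -/
theorem dis_ten_variable_relation_1 {S : Type*} (tri blk : S → S → S)
    (htri : ∀ a b c : S, tri (tri a b) c = tri a (tri b c))
    (hblk : ∀ a b c : S, blk (blk a b) c = blk a (blk b c))
    (hint : ∀ a b c d : S, blk (tri a b) (tri c d) = tri (blk a c) (blk b d))
    (a b c d e f g h i j : S) :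
    tri (blk (tri a b) (tri c (blk d e))) (blk (tri (blk f g) h) (tri i j)) =
    tri (blk (tri a (blk (blk b d) g)) (tri c e)) (blk (tri f h) (tri i j)) := by
  have vslide := blk_tri_blk_shift tri blk hint hblk
  have hslide := tri_blk_tri_shift tri blk hint htri
  calc _ = tri (blk (tri a (blk b d)) (tri c e)) (blk (tri (blk f g) h) (tri i j)) := by
          rw [vslide]
    _ = tri (blk (tri (tri a (blk b d)) (blk f g)) (tri c e)) (blk h (tri i j)) := hslide ..
    _ = tri (blk (tri (tri a (blk b d)) f) (tri c (blk g e))) (blk h (tri i j)) := by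
          rw [vslide]
    _ = tri (blk (tri a (blk b d)) (tri c (blk g e))) (blk (tri f h) (tri i j)) := (hslide ..).symm
    _ = _ := by rw [vslide]
end

section
/- In every double interchange semigroup S, for all elements a, b, c, d, e, f, g, h, i, j of S: ((a ▵ b) ▴ (c ▵ (d ▴ e))) ▵ (((f ▴ g) ▵ h) ▴ (i ▵ j)) = (a ▴ (c ▵ (g ▴ e))) ▵ ((((b ▴ d) ▵ f) ▵ h) ▴ (i ▵ j)). -/
/-!
Read `tri` (`▵`) as horizontal and `blk` (`▴`) as vertical juxtaposition. Two moves suffice: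
in a two-by-two arrangement a vertical factor slides between the two cells of the right column
(`blk_tri_tri_blk`), and a horizontal factor crosses the seam between two columns
(`tri_blk_blk_tri`). Sliding `d` up, moving `f ▴ g` into the left column, sliding `g` down onto `e`
and moving `(b ▴ d) ▵ f` back into the right column turns one side into the other.
-/

theorem blk_tri_tri_blk {S : Type*} {tri blk : S → S → S}
    (hblk : ∀ a b c : S, blk (blk a b) c = blk a (blk b c))
    (hint : ∀ a b c d : S, blk (tri a b) (tri c d) = tri (blk a c) (blk b d))
    (a b c d e : S) :
    blk (tri a b) (tri c (blk d e)) = blk (tri a (blk b d)) (tri c e) := by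
  rw [hint, hint, hblk]

theorem tri_blk_blk_tri {S : Type*} {tri blk : S → S → S}
    (htri : ∀ a b c : S, tri (tri a b) c = tri a (tri b c))
    (hint : ∀ a b c d : S, blk (tri a b) (tri c d) = tri (blk a c) (blk b d))
    (a b u v w : S) :
    tri (blk a b) (blk (tri u v) w) = tri (blk (tri a u) b) (blk v w) := by
  rw [← hint, ← hint, htri]

/-- A ten-variable relation in every double interchange semigroup
(an intermediate step in the Configuration A rewriting).
Here `tri` is `▵` and `blk` is `▴`. -/
theorem dis_ten_variable_relation_2 {S : Type*} (tri blk : S → S → S)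
    (htri : ∀ a b c : S, tri (tri a b) c = tri a (tri b c))
    (hblk : ∀ a b c : S, blk (blk a b) c = blk a (blk b c))
    (hint : ∀ a b c d : S, blk (tri a b) (tri c d) = tri (blk a c) (blk b d))
    (a b c d e f g h i j : S) :
    tri (blk (tri a b) (tri c (blk d e))) (blk (tri (blk f g) h) (tri i j)) =
    tri (blk a (tri c (blk g e))) (blk (tri (tri (blk b d) f) h) (tri i j)) := by
  have slide := blk_tri_tri_blk hblk hint
  have shift := tri_blk_blk_tri htri hint
  calc tri (blk (tri a b) (tri c (blk d e))) (blk (tri (blk f g) h) (tri i j))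
      _ = tri (blk (tri a (blk b d)) (tri c e)) (blk (tri (blk f g) h) (tri i j)) :=
        congrArg (tri · _) (slide a b c d e)
      _ = tri (blk (tri (tri a (blk b d)) (blk f g)) (tri c e)) (blk h (tri i j)) := shift ..
      _ = tri (blk (tri (tri a (blk b d)) f) (tri c (blk g e))) (blk h (tri i j)) :=
        congrArg (tri · _) (slide _ f c g e).symm
      _ = tri (blk (tri a (tri (blk b d) f)) (tri c (blk g e))) (blk h (tri i j)) := by
        rw [htri a]
      _ = tri (blk a (tri c (blk g e))) (blk (tri (tri (blk b d) f) h) (tri i j)) :=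
        (shift ..).symm
end

section
/- In every double interchange semigroup S, for all elements a, b, c, d, e, f, g, h, i, j of S: ((a ▵ b) ▴ (c ▵ (d ▴ e))) ▵ (((f ▴ g) ▵ h) ▴ (i ▵ j)) = ((a ▵ (b ▴ d)) ▵ (f ▵ h)) ▴ (((c ▵ e) ▵ (g ▴ i)) ▵ j). -/
/-- A ten-variable relation in every double interchange semigroup
(an intermediate step in the Configuration A rewriting).
Here `tri` is `▵` and `blk` is `▴`. -/
theorem dis_ten_variable_relation_5 {S : Type*} (tri blk : S → S → S)
    (htri : ∀ a b c : S, tri (tri a b) c = tri a (tri b c))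
    (hblk : ∀ a b c : S, blk (blk a b) c = blk a (blk b c))
    (hint : ∀ a b c d : S, blk (tri a b) (tri c d) = tri (blk a c) (blk b d))
    (a b c d e f g h i j : S) :
    tri (blk (tri a b) (tri c (blk d e))) (blk (tri (blk f g) h) (tri i j)) =
    blk (tri (tri a (blk b d)) (tri f h)) (tri (tri (tri c e) (blk g i)) j) := by
  calc tri (blk (tri a b) (tri c (blk d e))) (blk (tri (blk f g) h) (tri i j))
      = tri (tri (blk a c) (blk b (blk d e))) (tri (blk (blk f g) i) (blk h j)) := by
        rw [hint, hint]
    _ = tri (tri (blk a c) (blk (blk b d) e)) (tri (blk f (blk g i)) (blk h j)) := by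
        rw [hblk b d e, hblk f g i]
    _ = tri (blk (tri a (blk b d)) (tri c e)) (blk (tri f h) (tri (blk g i) j)) := by
        rw [← hint a (blk b d) c e, ← hint f h (blk g i) j]
    _ = blk (tri (tri a (blk b d)) (tri f h)) (tri (tri c e) (tri (blk g i) j)) := by
        rw [← hint]
    _ = blk (tri (tri a (blk b d)) (tri f h)) (tri (tri (tri c e) (blk g i)) j) := by
        rw [htri (tri c e)]
end
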